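/- Assume the Riemann Hypothesis and suppose |y₁|, |y₂| ≤ log T. Let G(T,y₁,y₂) = (1/π²)·Σ_{n₁,n₂≤x} [Λ(n₁)Λ(n₂)/((n₁n₂)^{1/2}·log n₁·log n₂)]·f(log n₁/log x)·f(log n₂/log x)·∫_1^T sin((t+y₁)·log n₁)·sin((t+y₂)·log n₂) dt. Then for every ε > 0, G(T,y₁,y₂) = (T/2π²)·Σ_{n≤x} [Λ(n)²·cos((y₂−y₁)·log n)/(n·log² n)]·f(log n/log x)² + O(x^{2+ε}). -/

import Mathlib

open MeasureTheory Filter Finset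

/-- `f(u) = (π/2) u cot(πu/2)`. -/
noncomputable def fker (u : ℝ) : ℝ := Real.pi / 2 * u * Real.cot (Real.pi * u / 2)

/-- `G(T,y₁,y₂)` from the paper. -/
noncomputable def Gfun (T x y₁ y₂ : ℝ) : ℝ :=
  (1 / Real.pi ^ 2) *
    ∑ n₁ ∈ Finset.Icc 1 ⌊x⌋₊, ∑ n₂ ∈ Finset.Icc 1 ⌊x⌋₊,
      ArithmeticFunction.vonMangoldt n₁ * ArithmeticFunction.vonMangoldt n₂ /
          (Real.sqrt ((n₁ : ℝ) * (n₂ : ℝ)) * Real.log n₁ * Real.log n₂) *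
        fker (Real.log n₁ / Real.log x) * fker (Real.log n₂ / Real.log x) *
        ∫ t in (1 : ℝ)..T, Real.sin ((t + y₁) * Real.log n₁) * Real.sin ((t + y₂) * Real.log n₂)

/- ### Auxiliary lemmas -/

lemma integral_cos_linear {a : ℝ} (ha : a ≠ 0) (b T : ℝ) :
    ∫ t in (1:ℝ)..T, Real.cos (a*t + b) = (Real.sin (a*T+b) - Real.sin (a*1+b))/a := by
  have h : ∀ t ∈ Set.uIcc (1:ℝ) T,
      HasDerivAt (fun u => Real.sin (a*u+b)/a) (Real.cos (a*t+b)) t := by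
    intro t _
    have h1 : HasDerivAt (fun u : ℝ => a*u+b) a t := by
      simpa using ((hasDerivAt_id t).const_mul a).add_const b
    have h2 := (h1.sin).div_const a
    simpa [mul_div_assoc, mul_div_cancel_left₀, ha, mul_comm] using h2
  have hint : IntervalIntegrable (fun t => Real.cos (a*t+b)) volume 1 T :=
    (Real.continuous_cos.comp (by continuity)).intervalIntegrable 1 T
  have := intervalIntegral.integral_eq_sub_of_hasDerivAt h hint
  rw [this]; ring

lemma abs_integral_cos_le {a : ℝ} (ha : a ≠ 0) (b T : ℝ) :
    |∫ t in (1:ℝ)..T, Real.cos (a*t + b)| ≤ 2/|a| := by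
  rw [integral_cos_linear ha, abs_div]
  gcongr
  calc |Real.sin (a*T+b) - Real.sin (a*1+b)| ≤ |Real.sin (a*T+b)| + |Real.sin (a*1+b)| :=
        abs_sub _ _
    _ ≤ 1 + 1 := add_le_add (Real.abs_sin_le_one _) (Real.abs_sin_le_one _)
    _ = 2 := by norm_num

lemma sinsin (α β y₁ y₂ t : ℝ) :
    Real.sin ((t+y₁)*α) * Real.sin ((t+y₂)*β)
      = (Real.cos ((α-β)*t + (y₁*α - y₂*β)) - Real.cos ((α+β)*t + (y₁*α + y₂*β)))/2 := by
  have e1 : (α-β)*t + (y₁*α - y₂*β) = (t+y₁)*α - (t+y₂)*β := by ring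
  have e2 : (α+β)*t + (y₁*α + y₂*β) = (t+y₁)*α + (t+y₂)*β := by ring
  rw [e1, e2, Real.cos_sub, Real.cos_add]; ring

lemma integral_sinsin (α β y₁ y₂ T : ℝ) :
    ∫ t in (1:ℝ)..T, Real.sin ((t+y₁)*α) * Real.sin ((t+y₂)*β)
      = ((∫ t in (1:ℝ)..T, Real.cos ((α-β)*t + (y₁*α - y₂*β)))
        - ∫ t in (1:ℝ)..T, Real.cos ((α+β)*t + (y₁*α + y₂*β)))/2 := by
  simp_rw [sinsin]
  rw [intervalIntegral.integral_div,
    intervalIntegral.integral_sub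
      (Continuous.intervalIntegrable (by continuity) 1 T)
      (Continuous.intervalIntegrable (by continuity) 1 T)]

lemma fker_nonneg {u : ℝ} (h0 : 0 < u) (h1 : u ≤ 1) : 0 ≤ fker u := by
  have hv0 : 0 < Real.pi * u / 2 := by positivity
  have hv1 : Real.pi * u / 2 ≤ Real.pi / 2 := by
    have := Real.pi_pos; nlinarith
  rw [fker, Real.cot_eq_cos_div_sin]
  have hs : 0 < Real.sin (Real.pi * u / 2) :=
    Real.sin_pos_of_pos_of_lt_pi hv0 (lt_of_le_of_lt hv1 (by linarith [Real.pi_pos]))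
  have hc : 0 ≤ Real.cos (Real.pi * u / 2) :=
    Real.cos_nonneg_of_mem_Icc ⟨by linarith, hv1⟩
  positivity

lemma fker_le_one {u : ℝ} (h0 : 0 < u) (h1 : u ≤ 1) : fker u ≤ 1 := by
  set v := Real.pi * u / 2 with hv
  have hv0 : 0 < v := by rw [hv]; positivity
  have hv1 : v ≤ Real.pi / 2 := by
    have := Real.pi_pos; rw [hv]; nlinarith
  have hs : 0 < Real.sin v :=
    Real.sin_pos_of_pos_of_lt_pi hv0 (lt_of_le_of_lt hv1 (by linarith [Real.pi_pos]))
  have key : v * Real.cos v ≤ Real.sin v := by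
    rcases lt_or_eq_of_le hv1 with h | h
    · have := Real.lt_tan hv0 h
      have hcpos : 0 < Real.cos v := Real.cos_pos_of_mem_Ioo ⟨by linarith, h⟩
      rw [Real.tan_eq_sin_div_cos, lt_div_iff₀ hcpos] at this
      linarith
    · rw [h, Real.cos_pi_div_two]; simp [hs.le]
  have hfv : fker u = v * (Real.cos v / Real.sin v) := by
    rw [fker, Real.cot_eq_cos_div_sin, hv]; ring
  rw [hfv, mul_div_assoc', div_le_one hs]; exact key

lemma sum_one_div_sqrt (N : ℕ) :
    ∑ n ∈ Finset.Icc 1 N, 1/Real.sqrt n ≤ 2 * Real.sqrt N := by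
  induction N with
  | zero => simp
  | succ N ih =>
    rw [Finset.sum_Icc_succ_top (by omega)]
    have h1 : (0:ℝ) < Real.sqrt (N+1) := Real.sqrt_pos.mpr (by positivity)
    have h2 : Real.sqrt N * Real.sqrt (N+1) ≤ N + 1/2 := by
      rw [← Real.sqrt_mul (by positivity)]
      have h : ((N:ℝ) * (N+1)) ≤ (N + 1/2)^2 := by nlinarith
      calc Real.sqrt ((N:ℝ)*(N+1)) ≤ Real.sqrt ((N+1/2)^2) := Real.sqrt_le_sqrt h
        _ = N + 1/2 := Real.sqrt_sq (by positivity)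
    have h3 : Real.sqrt (N+1) * Real.sqrt (N+1) = (N:ℝ)+1 :=
      Real.mul_self_sqrt (by positivity)
    have key : 1/Real.sqrt ((N:ℝ)+1) ≤ 2*Real.sqrt ((N:ℝ)+1) - 2*Real.sqrt N := by
      rw [div_le_iff₀ h1]; nlinarith
    push_cast
    push_cast at ih key
    linarith

lemma log_gap {m n : ℕ} (hm : 1 ≤ m) (hmn : m < n) :
    1/(n:ℝ) ≤ Real.log n - Real.log m := by
  have hm0 : (0:ℝ) < m := by exact_mod_cast hm
  have hn0 : (0:ℝ) < n := by
    have h : 0 < n := by omega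
    exact_mod_cast h
  have hmn' : (m:ℝ) < n := by exact_mod_cast hmn
  have hdiv : Real.log n - Real.log m = Real.log ((n:ℝ)/m) :=
    (Real.log_div (by positivity) (by positivity)).symm
  have hy : (0:ℝ) < (m:ℝ)/n := by positivity
  have h1 : Real.log ((m:ℝ)/n) ≤ (m:ℝ)/n - 1 := Real.log_le_sub_one_of_pos hy
  have h2 : Real.log ((m:ℝ)/n) = - Real.log ((n:ℝ)/m) := by
    rw [← Real.log_inv]; congr 1; field_simp
  have h3 : 1 - (m:ℝ)/n ≤ Real.log ((n:ℝ)/m) := by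
    rw [h2] at h1; linarith
  have h4 : 1/(n:ℝ) ≤ 1 - (m:ℝ)/n := by
    rw [le_sub_iff_add_le, ← add_div, div_le_one hn0]
    have : (m:ℝ) + 1 ≤ n := by exact_mod_cast hmn
    linarith
  rw [hdiv]; linarith

lemma offdiag_est {α β y₁ y₂ T x : ℝ} (hx : 0 < x) (hne : α ≠ β)
    (hgap : 1/x ≤ |α - β|) (hsum : 1 ≤ α + β) :
    |∫ t in (1:ℝ)..T, Real.sin ((t+y₁)*α) * Real.sin ((t+y₂)*β)| ≤ x + 1 := by
  rw [integral_sinsin]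
  have h1 := abs_integral_cos_le (a := α - β) (sub_ne_zero.mpr hne) (y₁*α - y₂*β) T
  have h2 := abs_integral_cos_le (a := α + β) (ne_of_gt (by linarith)) (y₁*α + y₂*β) T
  have hgap0 : (0:ℝ) < 1/x := by positivity
  have h1' : 2/|α-β| ≤ 2*x := by
    calc 2/|α-β| ≤ 2/(1/x) := by
          apply div_le_div_of_nonneg_left (by norm_num) hgap0 hgap
      _ = 2*x := by field_simp
  have h2' : 2/|α+β| ≤ 2 := by
    rw [abs_of_pos (by linarith)]
    rw [div_le_iff₀ (by linarith)]; linarith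
  rw [abs_div]
  rw [abs_of_pos (by norm_num : (0:ℝ) < 2)]
  rw [div_le_iff₀ (by norm_num : (0:ℝ) < 2)]
  calc |(∫ t in (1:ℝ)..T, Real.cos ((α-β)*t + (y₁*α - y₂*β)))
        - ∫ t in (1:ℝ)..T, Real.cos ((α+β)*t + (y₁*α + y₂*β))|
      ≤ |∫ t in (1:ℝ)..T, Real.cos ((α-β)*t + (y₁*α - y₂*β))|
        + |∫ t in (1:ℝ)..T, Real.cos ((α+β)*t + (y₁*α + y₂*β))| := abs_sub _ _
    _ ≤ 2*x + 2 := by linarith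
    _ = (x+1)*2 := by ring

lemma diag_est {α : ℝ} (hα : 1/2 ≤ α) (y₁ y₂ T : ℝ) :
    |(∫ t in (1:ℝ)..T, Real.sin ((t+y₁)*α) * Real.sin ((t+y₂)*α))
      - T/2 * Real.cos ((y₂-y₁)*α)| ≤ 3/2 := by
  rw [integral_sinsin]
  have hA : (∫ t in (1:ℝ)..T, Real.cos ((α-α)*t + (y₁*α - y₂*α)))
      = (T-1) * Real.cos (y₁*α - y₂*α) := by
    simp [sub_self, intervalIntegral.integral_const, smul_eq_mul]
  have hc : Real.cos (y₁*α - y₂*α) = Real.cos ((y₂-y₁)*α) := by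
    rw [show y₁*α - y₂*α = -((y₂-y₁)*α) by ring, Real.cos_neg]
  have hB : |∫ t in (1:ℝ)..T, Real.cos ((α+α)*t + (y₁*α + y₂*α))| ≤ 2 := by
    have h := abs_integral_cos_le (a := α+α) (ne_of_gt (by linarith)) (y₁*α + y₂*α) T
    have h2 : 2/|α+α| ≤ 2 := by
      rw [abs_of_pos (by linarith)]
      rw [div_le_iff₀ (by linarith)]; linarith
    linarith
  rw [hA, hc]
  set C := Real.cos ((y₂-y₁)*α) with hC
  set B := ∫ t in (1:ℝ)..T, Real.cos ((α+α)*t + (y₁*α + y₂*α)) with hB'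
  have hC1 : |C| ≤ 1 := Real.abs_cos_le_one _
  have heq : ((T-1)*C - B)/2 - T/2*C = -(C + B)/2 := by ring
  rw [heq, abs_div, abs_neg, abs_of_pos (by norm_num : (0:ℝ) < 2),
    div_le_iff₀ (by norm_num : (0:ℝ) < 2)]
  calc |C + B| ≤ |C| + |B| := abs_add_le _ _
    _ ≤ 1 + 2 := add_le_add hC1 hB
    _ = 3/2*2 := by norm_num

lemma cf_bounds {x : ℝ} (hx : 4 ≤ x) {n : ℕ} (h2 : 2 ≤ n) (hnx : (n:ℝ) ≤ x) :
    0 ≤ ArithmeticFunction.vonMangoldt n / (Real.sqrt n * Real.log n)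
        * fker (Real.log n / Real.log x) ∧
      ArithmeticFunction.vonMangoldt n / (Real.sqrt n * Real.log n)
        * fker (Real.log n / Real.log x) ≤ 1/Real.sqrt n := by
  have hn1 : (1:ℝ) < n := by exact_mod_cast h2
  have hlogn : 0 < Real.log n := Real.log_pos hn1
  have hlogx : 0 < Real.log x := Real.log_pos (by linarith)
  have hs : 0 < Real.sqrt n := Real.sqrt_pos.mpr (by positivity)
  have hu0 : 0 < Real.log n / Real.log x := div_pos hlogn hlogx
  have hu1 : Real.log n / Real.log x ≤ 1 := by
    rw [div_le_one hlogx]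
    exact Real.log_le_log (by positivity) hnx
  have hf0 := fker_nonneg hu0 hu1
  have hf1 := fker_le_one hu0 hu1
  have hΛ0 := ArithmeticFunction.vonMangoldt_nonneg (n := n)
  constructor
  · exact mul_nonneg (div_nonneg hΛ0 (by positivity)) hf0
  · calc ArithmeticFunction.vonMangoldt n / (Real.sqrt n * Real.log n)
          * fker (Real.log n / Real.log x)
        ≤ ArithmeticFunction.vonMangoldt n / (Real.sqrt n * Real.log n) :=
          mul_le_of_le_one_right (div_nonneg hΛ0 (by positivity)) hf1
      _ ≤ Real.log n / (Real.sqrt n * Real.log n) := by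
          have := ArithmeticFunction.vonMangoldt_le_log (n := n)
          gcongr
      _ = 1/Real.sqrt n := by
          field_simp

lemma alg1 (a b s₁ s₂ L₁ L₂ f₁ f₂ I : ℝ) :
    a * b / (s₁*s₂ * L₁ * L₂) * f₁ * f₂ * I = (a/(s₁*L₁)*f₁) * (b/(s₂*L₂)*f₂) * I := by
  simp only [div_eq_mul_inv, mul_inv]; ring

lemma alg2 (a s L f C T n : ℝ) (hn : n = s*s) :
    T/2 * (a^2 * C / (n * L^2) * f^2) = (a/(s*L)*f) * (a/(s*L)*f) * (T/2*C) := by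
  subst hn; simp only [div_eq_mul_inv, mul_inv]; ring

lemma pair_bound (T x y₁ y₂ : ℝ) (hx : 4 ≤ x) {n₁ n₂ : ℕ}
    (h1 : n₁ ∈ Finset.Icc 1 ⌊x⌋₊) (h2 : n₂ ∈ Finset.Icc 1 ⌊x⌋₊) :
    |ArithmeticFunction.vonMangoldt n₁ * ArithmeticFunction.vonMangoldt n₂ /
          (Real.sqrt ((n₁ : ℝ) * (n₂ : ℝ)) * Real.log n₁ * Real.log n₂) *
        fker (Real.log n₁ / Real.log x) * fker (Real.log n₂ / Real.log x) *
        (∫ t in (1 : ℝ)..T, Real.sin ((t + y₁) * Real.log n₁) * Real.sin ((t + y₂) * Real.log n₂))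
      - (if n₁ = n₂ then
          T/2 * (ArithmeticFunction.vonMangoldt n₁ ^ 2 * Real.cos ((y₂ - y₁) * Real.log n₁) /
            ((n₁:ℝ) * Real.log n₁ ^ 2) * fker (Real.log n₁ / Real.log x) ^ 2) else 0)|
      ≤ 2*x/(Real.sqrt n₁ * Real.sqrt n₂) := by
  have hx0 : (0:ℝ) < x := by linarith
  obtain ⟨hn₁1, hn₁N⟩ := Finset.mem_Icc.mp h1
  obtain ⟨hn₂1, hn₂N⟩ := Finset.mem_Icc.mp h2
  rcases eq_or_ne n₁ 1 with rfl | he1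
  · simp only [ArithmeticFunction.vonMangoldt_apply_one, zero_mul, zero_div, ne_eq,
      OfNat.ofNat_ne_zero, not_false_eq_true, zero_pow, mul_zero, ite_self, sub_zero, abs_zero]
    positivity
  rcases eq_or_ne n₂ 1 with rfl | he2
  · simp only [ArithmeticFunction.vonMangoldt_apply_one, mul_zero, zero_div, zero_mul,
      if_neg he1, sub_zero, abs_zero]
    positivity
  have h21 : 2 ≤ n₁ := by omega
  have h22 : 2 ≤ n₂ := by omega
  have hn₁0 : (0:ℝ) < n₁ := by exact_mod_cast (by omega : 0 < n₁)
  have hn₂0 : (0:ℝ) < n₂ := by exact_mod_cast (by omega : 0 < n₂)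
  have hs₁ : 0 < Real.sqrt n₁ := Real.sqrt_pos.mpr hn₁0
  have hs₂ : 0 < Real.sqrt n₂ := Real.sqrt_pos.mpr hn₂0
  have hxn₁ : (n₁:ℝ) ≤ x :=
    le_trans (by exact_mod_cast hn₁N : (n₁:ℝ) ≤ (⌊x⌋₊:ℝ)) (Nat.floor_le hx0.le)
  have hxn₂ : (n₂:ℝ) ≤ x :=
    le_trans (by exact_mod_cast hn₂N : (n₂:ℝ) ≤ (⌊x⌋₊:ℝ)) (Nat.floor_le hx0.le)
  obtain ⟨hc₁0, hc₁⟩ := cf_bounds hx h21 hxn₁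
  obtain ⟨hc₂0, hc₂⟩ := cf_bounds hx h22 hxn₂
  have hlog₁ : (1:ℝ)/2 ≤ Real.log n₁ := by
    have hd := Real.log_two_gt_d9
    have hmono : Real.log 2 ≤ Real.log n₁ :=
      Real.log_le_log (by norm_num) (by exact_mod_cast h21)
    linarith
  have hlog₂ : (1:ℝ)/2 ≤ Real.log n₂ := by
    have hd := Real.log_two_gt_d9
    have hmono : Real.log 2 ≤ Real.log n₂ :=
      Real.log_le_log (by norm_num) (by exact_mod_cast h22)
    linarith
  have e1 : ArithmeticFunction.vonMangoldt n₁ * ArithmeticFunction.vonMangoldt n₂ /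
          (Real.sqrt ((n₁ : ℝ) * (n₂ : ℝ)) * Real.log n₁ * Real.log n₂) *
        fker (Real.log n₁ / Real.log x) * fker (Real.log n₂ / Real.log x) *
        (∫ t in (1 : ℝ)..T, Real.sin ((t + y₁) * Real.log n₁) * Real.sin ((t + y₂) * Real.log n₂))
      = (ArithmeticFunction.vonMangoldt n₁ / (Real.sqrt n₁ * Real.log n₁)
            * fker (Real.log n₁ / Real.log x))
        * (ArithmeticFunction.vonMangoldt n₂ / (Real.sqrt n₂ * Real.log n₂)
            * fker (Real.log n₂ / Real.log x))
        * (∫ t in (1 : ℝ)..T,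
            Real.sin ((t + y₁) * Real.log n₁) * Real.sin ((t + y₂) * Real.log n₂)) := by
    rw [Real.sqrt_mul hn₁0.le]
    exact alg1 _ _ _ _ _ _ _ _ _
  rcases eq_or_ne n₁ n₂ with rfl | hne
  · rw [if_pos rfl, e1,
      alg2 (ArithmeticFunction.vonMangoldt n₁) (Real.sqrt n₁) (Real.log n₁)
        (fker (Real.log n₁ / Real.log x)) (Real.cos ((y₂ - y₁) * Real.log n₁)) T
        ((n₁:ℝ)) (Real.mul_self_sqrt hn₁0.le).symm]
    set c := ArithmeticFunction.vonMangoldt n₁ / (Real.sqrt n₁ * Real.log n₁)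
        * fker (Real.log n₁ / Real.log x) with hc
    set I := ∫ t in (1 : ℝ)..T,
        Real.sin ((t + y₁) * Real.log n₁) * Real.sin ((t + y₂) * Real.log n₁) with hI
    set C := Real.cos ((y₂ - y₁) * Real.log n₁) with hCc
    have heq : c*c*I - c*c*(T/2*C) = (c*c) * (I - T/2*C) := by ring
    rw [heq, abs_mul, abs_of_nonneg (mul_nonneg hc₁0 hc₁0)]
    have key := diag_est hlog₁ y₁ y₂ T
    calc c*c*|I - T/2*C| ≤ (1/Real.sqrt n₁ * (1/Real.sqrt n₁)) * (3/2) := by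
          apply mul_le_mul (mul_le_mul hc₁ hc₁ hc₁0 (by positivity)) key (abs_nonneg _)
            (by positivity)
      _ = (3/2)/(Real.sqrt n₁ * Real.sqrt n₁) := by field_simp
      _ ≤ 2*x/(Real.sqrt n₁ * Real.sqrt n₁) := by gcongr; linarith
  · rw [if_neg hne, sub_zero, e1, abs_mul, abs_mul, abs_of_nonneg hc₁0, abs_of_nonneg hc₂0]
    have key : Real.log n₁ ≠ Real.log n₂ ∧ 1/x ≤ |Real.log n₁ - Real.log n₂| := by
      rcases lt_or_gt_of_ne hne with h | h
      · have hg := log_gap (by omega : 1 ≤ n₁) h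
        have hp2 : (0:ℝ) < 1/(n₂:ℝ) := by positivity
        have hxx : 1/x ≤ 1/(n₂:ℝ) := by
          apply div_le_div_of_nonneg_left (by norm_num) hn₂0 hxn₂
        have hnn : (0:ℝ) ≤ Real.log n₂ - Real.log n₁ := by linarith
        constructor
        · intro hEq; rw [hEq] at hg; linarith
        · rw [abs_sub_comm, abs_of_nonneg hnn]; linarith
      · have hg := log_gap (by omega : 1 ≤ n₂) h
        have hp1 : (0:ℝ) < 1/(n₁:ℝ) := by positivity
        have hxx : 1/x ≤ 1/(n₁:ℝ) := by
          apply div_le_div_of_nonneg_left (by norm_num) hn₁0 hxn₁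
        have hnn : (0:ℝ) ≤ Real.log n₁ - Real.log n₂ := by linarith
        constructor
        · intro hEq; rw [hEq] at hg; linarith
        · rw [abs_of_nonneg hnn]; linarith
    have hIest := offdiag_est (y₁ := y₁) (y₂ := y₂) (T := T) hx0 key.1 key.2
      (by linarith : 1 ≤ Real.log n₁ + Real.log n₂)
    calc _ ≤ (1/Real.sqrt n₁ * (1/Real.sqrt n₂)) * (x+1) := by
          apply mul_le_mul (mul_le_mul hc₁ hc₂ hc₂0 (by positivity)) hIest (abs_nonneg _)
            (by positivity)
      _ = (x+1)/(Real.sqrt n₁ * Real.sqrt n₂) := by field_simp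
      _ ≤ 2*x/(Real.sqrt n₁ * Real.sqrt n₂) := by gcongr; linarith

theorem statement14 (hRH : RiemannHypothesis) (ε : ℝ) (hε : 0 < ε) :
    ∃ C > 0, ∀ᶠ T : ℝ in atTop, ∀ x : ℝ, 4 ≤ x → ∀ y₁ y₂ : ℝ,
      |y₁| ≤ Real.log T → |y₂| ≤ Real.log T →
      |Gfun T x y₁ y₂ -
          (T / (2 * Real.pi ^ 2)) *
            ∑ n ∈ Finset.Icc 1 ⌊x⌋₊,
              ArithmeticFunction.vonMangoldt n ^ 2 * Real.cos ((y₂ - y₁) * Real.log n) /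
                  ((n : ℝ) * Real.log n ^ 2) * fker (Real.log n / Real.log x) ^ 2| ≤
        C * x ^ (2 + ε) := by
  refine ⟨8, by norm_num, Filter.Eventually.of_forall fun T => ?_⟩
  intro x hx y₁ y₂ _ _
  have hx0 : (0:ℝ) < x := by linarith
  have hπ : (0:ℝ) < Real.pi ^ 2 := by positivity
  have hπ1 : (1:ℝ) ≤ Real.pi ^ 2 := by nlinarith [Real.pi_gt_three]
  have hG : Gfun T x y₁ y₂ = (1 / Real.pi ^ 2) *
      ∑ n₁ ∈ Finset.Icc 1 ⌊x⌋₊, ∑ n₂ ∈ Finset.Icc 1 ⌊x⌋₊,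
        ArithmeticFunction.vonMangoldt n₁ * ArithmeticFunction.vonMangoldt n₂ /
            (Real.sqrt ((n₁ : ℝ) * (n₂ : ℝ)) * Real.log n₁ * Real.log n₂) *
          fker (Real.log n₁ / Real.log x) * fker (Real.log n₂ / Real.log x) *
          (∫ t in (1 : ℝ)..T,
            Real.sin ((t + y₁) * Real.log n₁) * Real.sin ((t + y₂) * Real.log n₂)) := rfl
  have hmain : (T / (2 * Real.pi ^ 2)) *
      ∑ n ∈ Finset.Icc 1 ⌊x⌋₊,
        ArithmeticFunction.vonMangoldt n ^ 2 * Real.cos ((y₂ - y₁) * Real.log n) /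
            ((n : ℝ) * Real.log n ^ 2) * fker (Real.log n / Real.log x) ^ 2
    = (1 / Real.pi ^ 2) * ∑ n₁ ∈ Finset.Icc 1 ⌊x⌋₊, ∑ n₂ ∈ Finset.Icc 1 ⌊x⌋₊,
        (if n₁ = n₂ then
          T/2 * (ArithmeticFunction.vonMangoldt n₁ ^ 2 * Real.cos ((y₂ - y₁) * Real.log n₁) /
            ((n₁:ℝ) * Real.log n₁ ^ 2) * fker (Real.log n₁ / Real.log x) ^ 2) else 0) := by
    have h1 : ∀ n₁ ∈ Finset.Icc 1 ⌊x⌋₊,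
        (∑ n₂ ∈ Finset.Icc 1 ⌊x⌋₊, if n₁ = n₂ then
          T/2 * (ArithmeticFunction.vonMangoldt n₁ ^ 2 * Real.cos ((y₂ - y₁) * Real.log n₁) /
            ((n₁:ℝ) * Real.log n₁ ^ 2) * fker (Real.log n₁ / Real.log x) ^ 2) else 0)
        = T/2 * (ArithmeticFunction.vonMangoldt n₁ ^ 2 * Real.cos ((y₂ - y₁) * Real.log n₁) /
            ((n₁:ℝ) * Real.log n₁ ^ 2) * fker (Real.log n₁ / Real.log x) ^ 2) := by
      intro n₁ h₁
      rw [Finset.sum_ite_eq (Finset.Icc 1 ⌊x⌋₊) n₁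
        (fun _ => T/2 * (ArithmeticFunction.vonMangoldt n₁ ^ 2 *
          Real.cos ((y₂ - y₁) * Real.log n₁) /
            ((n₁:ℝ) * Real.log n₁ ^ 2) * fker (Real.log n₁ / Real.log x) ^ 2)), if_pos h₁]
    rw [Finset.sum_congr rfl h1, ← Finset.mul_sum]
    ring
  rw [hG, hmain, ← mul_sub]
  have hsplit : (∑ n₁ ∈ Finset.Icc 1 ⌊x⌋₊, ∑ n₂ ∈ Finset.Icc 1 ⌊x⌋₊,
        ArithmeticFunction.vonMangoldt n₁ * ArithmeticFunction.vonMangoldt n₂ /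
            (Real.sqrt ((n₁ : ℝ) * (n₂ : ℝ)) * Real.log n₁ * Real.log n₂) *
          fker (Real.log n₁ / Real.log x) * fker (Real.log n₂ / Real.log x) *
          (∫ t in (1 : ℝ)..T,
            Real.sin ((t + y₁) * Real.log n₁) * Real.sin ((t + y₂) * Real.log n₂)))
      - ∑ n₁ ∈ Finset.Icc 1 ⌊x⌋₊, ∑ n₂ ∈ Finset.Icc 1 ⌊x⌋₊,
        (if n₁ = n₂ then
          T/2 * (ArithmeticFunction.vonMangoldt n₁ ^ 2 * Real.cos ((y₂ - y₁) * Real.log n₁) /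
            ((n₁:ℝ) * Real.log n₁ ^ 2) * fker (Real.log n₁ / Real.log x) ^ 2) else 0)
    = ∑ n₁ ∈ Finset.Icc 1 ⌊x⌋₊, ∑ n₂ ∈ Finset.Icc 1 ⌊x⌋₊,
        (ArithmeticFunction.vonMangoldt n₁ * ArithmeticFunction.vonMangoldt n₂ /
            (Real.sqrt ((n₁ : ℝ) * (n₂ : ℝ)) * Real.log n₁ * Real.log n₂) *
          fker (Real.log n₁ / Real.log x) * fker (Real.log n₂ / Real.log x) *
          (∫ t in (1 : ℝ)..T,
            Real.sin ((t + y₁) * Real.log n₁) * Real.sin ((t + y₂) * Real.log n₂))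
        - (if n₁ = n₂ then
          T/2 * (ArithmeticFunction.vonMangoldt n₁ ^ 2 * Real.cos ((y₂ - y₁) * Real.log n₁) /
            ((n₁:ℝ) * Real.log n₁ ^ 2) * fker (Real.log n₁ / Real.log x) ^ 2) else 0)) := by
    rw [← Finset.sum_sub_distrib]
    exact Finset.sum_congr rfl fun n₁ _ => (Finset.sum_sub_distrib _ _).symm
  rw [hsplit, abs_mul, abs_of_pos (by positivity : (0:ℝ) < 1 / Real.pi ^ 2)]
  have hbig : |∑ n₁ ∈ Finset.Icc 1 ⌊x⌋₊, ∑ n₂ ∈ Finset.Icc 1 ⌊x⌋₊,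
        (ArithmeticFunction.vonMangoldt n₁ * ArithmeticFunction.vonMangoldt n₂ /
            (Real.sqrt ((n₁ : ℝ) * (n₂ : ℝ)) * Real.log n₁ * Real.log n₂) *
          fker (Real.log n₁ / Real.log x) * fker (Real.log n₂ / Real.log x) *
          (∫ t in (1 : ℝ)..T,
            Real.sin ((t + y₁) * Real.log n₁) * Real.sin ((t + y₂) * Real.log n₂))
        - (if n₁ = n₂ then
          T/2 * (ArithmeticFunction.vonMangoldt n₁ ^ 2 * Real.cos ((y₂ - y₁) * Real.log n₁) /
            ((n₁:ℝ) * Real.log n₁ ^ 2) * fker (Real.log n₁ / Real.log x) ^ 2) else 0))|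
      ≤ ∑ n₁ ∈ Finset.Icc 1 ⌊x⌋₊, ∑ n₂ ∈ Finset.Icc 1 ⌊x⌋₊,
          2*x/(Real.sqrt n₁ * Real.sqrt n₂) := by
    refine (Finset.abs_sum_le_sum_abs _ _).trans (Finset.sum_le_sum fun n₁ h₁ => ?_)
    refine (Finset.abs_sum_le_sum_abs _ _).trans
      (Finset.sum_le_sum fun n₂ h₂ => pair_bound T x y₁ y₂ hx h₁ h₂)
  have hsum2 : ∑ n₁ ∈ Finset.Icc 1 ⌊x⌋₊, ∑ n₂ ∈ Finset.Icc 1 ⌊x⌋₊,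
      2*x/(Real.sqrt n₁ * Real.sqrt n₂)
    = 2*x * ((∑ n ∈ Finset.Icc 1 ⌊x⌋₊, 1/Real.sqrt n)
      * (∑ n ∈ Finset.Icc 1 ⌊x⌋₊, 1/Real.sqrt n)) := by
    rw [Finset.sum_mul_sum, Finset.mul_sum]
    refine Finset.sum_congr rfl fun n₁ _ => ?_
    rw [Finset.mul_sum]
    refine Finset.sum_congr rfl fun n₂ _ => ?_
    rw [div_mul_div_comm, one_mul, mul_one_div]
  have hU0 : (0:ℝ) ≤ ∑ n ∈ Finset.Icc 1 ⌊x⌋₊, 1/Real.sqrt n :=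
    Finset.sum_nonneg fun n _ => by positivity
  have hU : ∑ n ∈ Finset.Icc 1 ⌊x⌋₊, 1/Real.sqrt n ≤ 2 * Real.sqrt x :=
    (sum_one_div_sqrt ⌊x⌋₊).trans (by
      have := Real.sqrt_le_sqrt (Nat.floor_le hx0.le)
      linarith)
  have hfinal : (1 / Real.pi ^ 2) * (∑ n₁ ∈ Finset.Icc 1 ⌊x⌋₊, ∑ n₂ ∈ Finset.Icc 1 ⌊x⌋₊,
      2*x/(Real.sqrt n₁ * Real.sqrt n₂)) ≤ 8 * x ^ (2 + ε) := by
    rw [hsum2]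
    have hss : Real.sqrt x * Real.sqrt x = x := Real.mul_self_sqrt hx0.le
    have step1 : 2*x * ((∑ n ∈ Finset.Icc 1 ⌊x⌋₊, 1/Real.sqrt n)
        * (∑ n ∈ Finset.Icc 1 ⌊x⌋₊, 1/Real.sqrt n)) ≤ 2*x * ((2*Real.sqrt x) * (2*Real.sqrt x)) := by
      gcongr
    have step2 : 2*x * ((2*Real.sqrt x) * (2*Real.sqrt x)) = 8 * (x*x) := by
      nlinarith [hss]
    have hpow : x*x ≤ x ^ (2+ε) := by
      have h1 : x ^ ((2:ℝ)) ≤ x ^ (2+ε) :=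
        Real.rpow_le_rpow_of_exponent_le (by linarith) (by linarith)
      have h2 : x*x = x ^ ((2:ℝ)) := by
        rw [show (2:ℝ) = ((2:ℕ):ℝ) by norm_num, Real.rpow_natCast]; ring
      rw [h2]; exact h1
    have hπle : (1:ℝ)/Real.pi^2 ≤ 1 := by
      rw [div_le_one hπ]; exact hπ1
    calc (1 / Real.pi ^ 2) * (2*x * ((∑ n ∈ Finset.Icc 1 ⌊x⌋₊, 1/Real.sqrt n)
          * (∑ n ∈ Finset.Icc 1 ⌊x⌋₊, 1/Real.sqrt n)))
        ≤ 1 * (2*x * ((∑ n ∈ Finset.Icc 1 ⌊x⌋₊, 1/Real.sqrt n)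
          * (∑ n ∈ Finset.Icc 1 ⌊x⌋₊, 1/Real.sqrt n))) := by
          apply mul_le_mul_of_nonneg_right hπle (by positivity)
      _ = 2*x * ((∑ n ∈ Finset.Icc 1 ⌊x⌋₊, 1/Real.sqrt n)
          * (∑ n ∈ Finset.Icc 1 ⌊x⌋₊, 1/Real.sqrt n)) := one_mul _
      _ ≤ 2*x * ((2*Real.sqrt x) * (2*Real.sqrt x)) := step1
      _ = 8 * (x*x) := step2
      _ ≤ 8 * x ^ (2+ε) := by linarith
  exact le_trans (mul_le_mul_of_nonneg_left hbig (by positivity)) hfinal
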